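/- For real a > 0 and |x| < a, ∑_{n=2}^∞ H_n (ζ(n,a) − x ζ(n+1,a)) x^n = ζ(2,a) x² + ψ(a) x + log Γ(a−x) − log Γ(a). -/

import Mathlib

/-!
Expanding `ζ(m, a) x ^ m = ∑ₖ tₖ ^ m` with `tₖ = x / (k + a)` and exchanging the two sums
reduces the series to `∑ₖ φ(tₖ)`, where `φ(t) = ∑ₙ H_{n+2} (t ^ (n+2) - t ^ (n+3))`. Abel summation
with `H_{n+1} - H_n = 1 / (n + 1)` gives `φ(t) = t² - t - log (1 - t)`. The `t²` terms add up to
`ζ(2, a) x²`, and the partial sums of `∑ₖ (-tₖ - log (1 - tₖ))` are differences of the sequences of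
the Bohr–Mollerup proof, which tend to `log Γ`, plus `x (log n - ∑_{m ≤ n} 1 / (a + m))`,
which tends to `x ψ(a)` because convexity of `log Γ` squeezes `ψ(a + n + 1)` between `log (a + n)`
and `log (a + n + 1)`.
-/

/-- Hurwitz zeta function `ζ(n, a) = ∑_{k≥0} 1/(k+a)^n` for an integer exponent. -/
noncomputable def hzeta (n : ℕ) (a : ℝ) : ℝ := ∑' k : ℕ, 1 / ((k : ℝ) + a) ^ n

/-- The real digamma function `ψ(x) = Γ'(x)/Γ(x)`. -/
noncomputable def digamma (x : ℝ) : ℝ := deriv Real.Gamma x / Real.Gamma x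

open Real Filter Topology Finset

lemma harmonic_le_self (n : ℕ) : harmonic n ≤ n := by
  refine (Finset.sum_le_card_nsmul (range n) _ 1 fun i _ => ?_).trans (by simp)
  exact inv_le_one_of_one_le₀ (by norm_cast; omega)

lemma abs_harmonic_le_self (n : ℕ) : |(harmonic n : ℝ)| ≤ n := by
  have hnonneg : 0 ≤ harmonic n := Finset.sum_nonneg fun i _ => by positivity
  rw [abs_of_nonneg (by exact_mod_cast hnonneg)]
  exact_mod_cast harmonic_le_self n

lemma summable_harmonic_mul_pow {t : ℝ} (ht : |t| < 1) :
    Summable fun n : ℕ => (harmonic n : ℝ) * t ^ n := by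
  refine .of_norm_bounded (g := fun n : ℕ => (n : ℝ) * |t| ^ n) ?_ fun n => ?_
  · simpa using summable_pow_mul_geometric_of_norm_lt_one 1 (r := |t|) (by simpa using ht)
  · rw [norm_mul, norm_pow, Real.norm_eq_abs, Real.norm_eq_abs]
    exact mul_le_mul_of_nonneg_right (abs_harmonic_le_self n) (by positivity)

lemma hasSum_harmonic_mul_pow_sub_pow {t : ℝ} (ht : |t| < 1) :
    HasSum (fun n : ℕ => (harmonic n : ℝ) * (t ^ n - t ^ (n + 1))) (-log (1 - t)) := by
  set S := ∑' n : ℕ, (harmonic n : ℝ) * t ^ n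
  have hS : HasSum (fun n : ℕ => (harmonic n : ℝ) * t ^ n) S :=
    (summable_harmonic_mul_pow ht).hasSum
  have hdiff : HasSum (fun n : ℕ => (harmonic n : ℝ) * (t ^ n - t ^ (n + 1))) (S - S * t) :=
    (hS.sub (hS.mul_right t)).congr_fun fun n => by ring
  have hshift : HasSum (fun n : ℕ => (harmonic (n + 1) : ℝ) * t ^ (n + 1)) S := by
    simpa using (hasSum_nat_add_iff' 1).mpr hS
  have hlog : HasSum (fun n : ℕ => t ^ (n + 1) / (n + 1)) (S - S * t) :=
    (hshift.sub (hS.mul_right t)).congr_fun fun n => by rw [harmonic_succ]; push_cast; ring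
  rwa [hlog.unique (hasSum_pow_div_log_of_abs_lt_one ht)] at hdiff

lemma hasSum_harmonic_add_two_mul_pow_sub_pow {t : ℝ} (ht : |t| < 1) :
    HasSum (fun n : ℕ => (harmonic (n + 2) : ℝ) * (t ^ (n + 2) - t ^ (n + 3)))
      (t ^ 2 - t - log (1 - t)) := by
  have h := (hasSum_nat_add_iff' 2).mpr (hasSum_harmonic_mul_pow_sub_pow ht)
  rwa [show -log (1 - t) - ∑ i ∈ range 2, (harmonic i : ℝ) * (t ^ i - t ^ (i + 1)) =
    t ^ 2 - t - log (1 - t) by simp [sum_range_succ]; ring] at h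

section PowerSums

variable {t : ℕ → ℝ} {r : ℝ}

lemma summable_uncurry_harmonic_mul_pow_sub_pow (htr : ∀ k, |t k| ≤ r) (hr : r < 1)
    (hsq : Summable fun k => t k ^ 2) :
    Summable (Function.uncurry fun (k n : ℕ) =>
      (harmonic (n + 2) : ℝ) * (t k ^ (n + 2) - t k ^ (n + 3))) := by
  have hr0 : 0 ≤ r := (abs_nonneg _).trans (htr 0)
  have hgeom : Summable fun n : ℕ => ((n : ℝ) + 2) * r ^ n := by
    have hlin := summable_pow_mul_geometric_of_norm_lt_one 1 (r := r)
      (by rwa [Real.norm_of_nonneg hr0])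
    simpa [add_mul] using hlin.add ((summable_geometric_of_lt_one hr0 hr).mul_left 2)
  refine .of_norm_bounded (hsq.mul_of_nonneg (hgeom.mul_left 2) (fun _ => sq_nonneg _)
    fun _ => by positivity) ?_
  rintro ⟨k, n⟩
  have hsub : |1 - t k| ≤ 2 := by
    have := abs_le.1 ((htr k).trans hr.le)
    rw [abs_le]; constructor <;> linarith
  calc ‖(harmonic (n + 2) : ℝ) * (t k ^ (n + 2) - t k ^ (n + 3))‖
      = |(harmonic (n + 2) : ℝ)| * (|t k| ^ n * t k ^ 2) * |1 - t k| := by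
        rw [Real.norm_eq_abs, ← sq_abs (t k), ← pow_add, ← abs_pow, ← abs_mul, ← abs_mul]
        ring_nf
    _ ≤ ((n + 2 : ℕ) : ℝ) * (r ^ n * t k ^ 2) * 2 := by
        gcongr
        · exact abs_harmonic_le_self _
        · exact htr k
    _ = t k ^ 2 * (2 * ((n + 2) * r ^ n)) := by push_cast; ring

lemma tsum_harmonic_mul_tsum_pow_sub_tsum_pow (htr : ∀ k, |t k| ≤ r) (hr : r < 1)
    (hsq : Summable fun k => t k ^ 2) :
    ∑' n : ℕ, (harmonic (n + 2) : ℝ) * (∑' k, t k ^ (n + 2) - ∑' k, t k ^ (n + 3)) =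
      ∑' k, (t k ^ 2 - t k - log (1 - t k)) := by
  have hpow : ∀ n, Summable fun k => t k ^ (n + 2) := fun n =>
    .of_norm_bounded hsq fun k => by
      rw [norm_pow, Real.norm_eq_abs, pow_add, sq_abs]
      exact mul_le_of_le_one_left (sq_nonneg _) (pow_le_one₀ (abs_nonneg _) ((htr k).trans hr.le))
  calc ∑' n : ℕ, (harmonic (n + 2) : ℝ) * (∑' k, t k ^ (n + 2) - ∑' k, t k ^ (n + 3))
      = ∑' n : ℕ, ∑' k, (harmonic (n + 2) : ℝ) * (t k ^ (n + 2) - t k ^ (n + 3)) :=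
        tsum_congr fun n => by rw [← (hpow n).tsum_sub (hpow (n + 1)), tsum_mul_left]
    _ = ∑' k, ∑' n : ℕ, (harmonic (n + 2) : ℝ) * (t k ^ (n + 2) - t k ^ (n + 3)) :=
        (summable_uncurry_harmonic_mul_pow_sub_pow htr hr hsq).tsum_comm
    _ = ∑' k, (t k ^ 2 - t k - log (1 - t k)) := tsum_congr fun k =>
        (hasSum_harmonic_add_two_mul_pow_sub_pow ((htr k).trans_lt hr)).tsum_eq

end PowerSums

section LogGamma

variable {y : ℝ}

lemma differentiableAt_Gamma_of_pos (hy : 0 < y) : DifferentiableAt ℝ Gamma y :=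
  differentiableAt_Gamma fun m => by linarith [(m.cast_nonneg : (0 : ℝ) ≤ m)]

lemma differentiableAt_log_comp_Gamma (hy : 0 < y) : DifferentiableAt ℝ (log ∘ Gamma) y :=
  (differentiableAt_Gamma_of_pos hy).log (Gamma_pos_of_pos hy).ne'

lemma digamma_eq_deriv_log_comp_Gamma (hy : 0 < y) : digamma y = deriv (log ∘ Gamma) y := by
  rw [digamma, Function.comp_def,
    deriv.log (differentiableAt_Gamma_of_pos hy) (Gamma_pos_of_pos hy).ne']

lemma log_comp_Gamma_add_one (hy : 0 < y) : (log ∘ Gamma) (y + 1) = (log ∘ Gamma) y + log y := by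
  simp only [Function.comp_apply, Gamma_add_one hy.ne',
    log_mul hy.ne' (Gamma_pos_of_pos hy).ne', add_comm]

lemma deriv_log_comp_Gamma_add_one (hy : 0 < y) :
    deriv (log ∘ Gamma) (y + 1) = deriv (log ∘ Gamma) y + 1 / y := by
  rw [← deriv_comp_add_const, one_div, ← deriv_log,
    ← deriv_add (differentiableAt_log_comp_Gamma hy) (differentiableAt_log hy.ne')]
  apply EventuallyEq.deriv_eq
  filter_upwards [eventually_gt_nhds hy] with z hz using log_comp_Gamma_add_one hz

lemma deriv_log_comp_Gamma_add_nat (hy : 0 < y) (n : ℕ) :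
    deriv (log ∘ Gamma) (y + n) = deriv (log ∘ Gamma) y + ∑ m ∈ range n, 1 / (y + m) := by
  induction n with
  | zero => simp
  | succ n ih =>
    rw [Nat.cast_succ, ← add_assoc, deriv_log_comp_Gamma_add_one (by positivity), ih,
      sum_range_succ, add_assoc]

lemma deriv_log_comp_Gamma_le_log (hy : 0 < y) : deriv (log ∘ Gamma) y ≤ log y := by
  refine (convexOn_log_Gamma.deriv_le_slope hy (by positivity : 0 < y + 1) (by linarith)
    (differentiableAt_log_comp_Gamma hy)).trans_eq ?_
  rw [slope_def_field, log_comp_Gamma_add_one hy]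
  ring

lemma log_le_deriv_log_comp_Gamma_add_one (hy : 0 < y) :
    log y ≤ deriv (log ∘ Gamma) (y + 1) := by
  refine le_of_eq_of_le ?_ (convexOn_log_Gamma.slope_le_deriv hy (by positivity : 0 < y + 1)
    (by linarith) (differentiableAt_log_comp_Gamma (by positivity)))
  rw [slope_def_field, log_comp_Gamma_add_one hy]
  ring

end LogGamma

lemma tendsto_log_sub_log_add_const (c : ℝ) :
    Tendsto (fun n : ℕ => log n - log (n + c)) atTop (𝓝 0) := by
  have h := ((continuousAt_log one_ne_zero).tendsto.comp (tendsto_natCast_div_add_atTop c))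
  rw [log_one] at h
  refine h.congr' ?_
  filter_upwards [eventually_gt_atTop 0,
    tendsto_natCast_atTop_atTop.eventually_gt_atTop (-c)] with n hn hnc
  exact log_div (Nat.cast_pos.2 hn).ne' (by linarith)

lemma tendsto_log_sub_sum_one_div_add {y : ℝ} (hy : 0 < y) :
    Tendsto (fun n : ℕ => log n - ∑ m ∈ range (n + 1), 1 / (y + m)) atTop (𝓝 (digamma y)) := by
  have hrem : Tendsto (fun n : ℕ => log n - deriv (log ∘ Gamma) (y + (n + 1 : ℕ))) atTop (𝓝 0) := by
    refine tendsto_of_tendsto_of_tendsto_of_le_of_le (tendsto_log_sub_log_add_const (y + 1))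
      (tendsto_log_sub_log_add_const y) (fun n => ?_) fun n => ?_
    · have := deriv_log_comp_Gamma_le_log (y := y + (n + 1 : ℕ)) (by positivity)
      rw [show (n : ℝ) + (y + 1) = y + (n + 1 : ℕ) by push_cast; ring]
      linarith
    · have := log_le_deriv_log_comp_Gamma_add_one (y := y + n) (by positivity)
      rw [show y + ((n + 1 : ℕ) : ℝ) = y + n + 1 by push_cast; ring, add_comm (n : ℝ)]
      linarith
  have h := hrem.const_add (deriv (log ∘ Gamma) y)
  rw [add_zero] at h
  rw [digamma_eq_deriv_log_comp_Gamma hy]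
  refine h.congr fun n => ?_
  rw [deriv_log_comp_Gamma_add_nat hy]
  ring

lemma hasSum_neg_div_sub_log_one_sub_div {a x : ℝ} (ha : 0 < a) (hx : x < a) :
    HasSum (fun k : ℕ => -(x / (k + a)) - log (1 - x / (k + a)))
      (digamma a * x + log (Gamma (a - x)) - log (Gamma a)) := by
  have hterm (k : ℕ) : -(x / (k + a)) - log (1 - x / (k + a)) =
      log (a + k) - log (a - x + k) - x * (1 / (a + k)) := by
    have hk : (0 : ℝ) < k + a := by positivity
    rw [show 1 - x / (k + a) = (a - x + k) / (a + k) by field_simp; ring,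
      log_div (by linarith [(k.cast_nonneg : (0 : ℝ) ≤ k)]) (by linarith)]
    ring
  have hnonneg (k : ℕ) : 0 ≤ -(x / (k + a)) - log (1 - x / (k + a)) := by
    have hk : (0 : ℝ) < 1 - x / (k + a) := by
      rw [sub_pos, div_lt_one (by positivity)]
      linarith [(k.cast_nonneg : (0 : ℝ) ≤ k)]
    linarith [log_le_sub_one_of_pos hk]
  -- the terms are nonnegative, so convergence of the partial sums is enough
  rw [hasSum_iff_tendsto_nat_of_nonneg hnonneg, ← tendsto_add_atTop_iff_nat 1]
  have hlim := ((BohrMollerup.tendsto_log_gamma (sub_pos.2 hx)).sub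
    (BohrMollerup.tendsto_log_gamma ha)).add ((tendsto_log_sub_sum_one_div_add ha).const_mul x)
  convert hlim using 2 with n
  · simp only [hterm, BohrMollerup.logGammaSeq, sum_sub_distrib, ← mul_sum]
    ring
  · ring

lemma hasSum_div_natCast_add_pow {a : ℝ} (ha : 0 < a) {n : ℕ} (hn : 2 ≤ n) (x : ℝ) :
    HasSum (fun k : ℕ => (x / (k + a)) ^ n) (hzeta n a * x ^ n) := by
  have hsum : Summable fun k : ℕ => 1 / ((k : ℝ) + a) ^ n :=
    ((summable_one_div_nat_add_rpow a n).2 (by exact_mod_cast hn)).congr fun k => by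
      rw [abs_of_pos (by positivity), rpow_natCast]
  rw [hzeta, ← tsum_mul_right]
  exact (hsum.mul_right (x ^ n)).hasSum.congr_fun fun k => by rw [div_pow]; ring

theorem harmonic_hurwitz_power_series (a x : ℝ) (ha : 0 < a) (hx : |x| < a) :
    ∑' n : ℕ, (harmonic (n + 2) : ℝ) * (hzeta (n + 2) a - x * hzeta (n + 3) a) * x ^ (n + 2) =
      hzeta 2 a * x ^ 2 + digamma a * x +
        Real.log (Real.Gamma (a - x)) - Real.log (Real.Gamma a) := by
  set t : ℕ → ℝ := fun k => x / (k + a)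
  have hpow (m : ℕ) (hm : 2 ≤ m) : ∑' k, t k ^ m = hzeta m a * x ^ m :=
    (hasSum_div_natCast_add_pow ha hm x).tsum_eq
  have htr (k : ℕ) : |t k| ≤ |x| / a := by
    rw [abs_div, abs_of_pos (show (0 : ℝ) < k + a by positivity)]
    gcongr
    linarith [(k.cast_nonneg : (0 : ℝ) ≤ k)]
  have hsq := hasSum_div_natCast_add_pow ha le_rfl x
  have hlog := hasSum_neg_div_sub_log_one_sub_div ha ((le_abs_self x).trans_lt hx)
  calc _ = ∑' n : ℕ, (harmonic (n + 2) : ℝ) * (∑' k, t k ^ (n + 2) - ∑' k, t k ^ (n + 3)) :=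
        tsum_congr fun n => by rw [hpow _ (by omega), hpow _ (by omega)]; ring
    _ = ∑' k, (t k ^ 2 + (-t k - log (1 - t k))) := by
        rw [tsum_harmonic_mul_tsum_pow_sub_tsum_pow htr ((div_lt_one ha).2 hx) hsq.summable]
        exact tsum_congr fun k => by ring
    _ = _ := by
        rw [(hsq.add hlog).tsum_eq]
        ring
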